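/- arXiv:0910.2443 — 3 statements merged into one kernel-verified Lean document; each statement's English description precedes it below -/
import Mathlib

section
/- For a k×ℓ matrix x and an ℓ×k matrix y over a commutative ring, det(Id_k + t·xᵀy) = ∑_{I,S} Δ_{I,S}(x) Δ_{S,I}(y) t^{|I|}, where the sum ranges over subsets I ⊆ {1,…,k} and S ⊆ {1,…,ℓ} with |I| = |S|, and Δ_{I,S}(x) denotes the minor of x with rows indexed by I and columns by S (with the convention that the empty minor is 1). -/
/-!
Expanding `det (1 + t • M)` multilinearly in the rows gives `∑_I t^|I| Δ_{I,I}(M)`; for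
`M = x * y` each principal minor is `∑_S Δ_{I,S}(x) Δ_{S,I}(y)` by Cauchy–Binet. Cauchy–Binet
in turn is the pairing `⟨f₁ ∧ ⋯ ∧ f_p, v₁ ∧ ⋯ ∧ v_p⟩ = det (f_i (v_j))` between `⋀^p` of the
dual and `⋀^p (Rˡ)`, evaluated by expanding `v₁ ∧ ⋯ ∧ v_p` in the standard basis of `⋀^p (Rˡ)`.
-/

open Polynomial Matrix exteriorPower

/-- The minor of `x` with rows indexed by `I` and columns by `S` (in increasing order);
zero if the cardinalities differ. The empty minor is `1`. -/
noncomputable def minor {R : Type*} [CommRing R] {k l : ℕ}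
    (x : Matrix (Fin k) (Fin l) R) (I : Finset (Fin k)) (S : Finset (Fin l)) : R :=
  if h : I.card = S.card then
    (x.submatrix (fun a => I.orderEmbOfFin rfl a) (fun a => S.orderEmbOfFin h.symm a)).det
  else 0

section

variable {R : Type*} [CommRing R]

theorem det_mul_eq_sum_det_submatrix_mul_det_submatrix {p : ℕ} {n : Type*} [Fintype n]
    [LinearOrder n] (A : Matrix (Fin p) n R) (B : Matrix n (Fin p) R) :
    (A * B).det = ∑ S : Set.powersetCard n p,
      (A.submatrix id (S.1.orderEmbOfFin S.2)).det *
        (B.submatrix (S.1.orderEmbOfFin S.2) id).det := by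
  let f : Fin p → Module.Dual R (n → R) := fun i => ∑ s, A i s • LinearMap.proj s
  let v : Fin p → n → R := fun j s => B s j
  have hf : ∀ i w, f i w = ∑ s, A i s * w s := fun i w => by simp [f]
  let b := Pi.basisFun R n
  have hAB : (A * B).det = pairingDual R (n → R) p (ιMulti R p f) (ιMulti R p v) := by
    rw [pairingDual_ιMulti_ιMulti, ← det_transpose]
    congr 1
    ext i j
    simp [hf, v, mul_apply]
  rw [hAB, ← (b.exteriorPower p).sum_repr (ιMulti R p v), map_sum]
  refine Finset.sum_congr rfl fun S _ => ?_
  have hcoord : (b.exteriorPower p).repr (ιMulti R p v) S =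
      (B.submatrix (S.1.orderEmbOfFin S.2) id).det := by
    rw [basis_repr_apply, ιMultiDual_apply_ιMulti, ← det_transpose]
    rfl
  have hpair : pairingDual R (n → R) p (ιMulti R p f) (b.exteriorPower p S) =
      (A.submatrix id (S.1.orderEmbOfFin S.2)).det := by
    rw [basis_apply, ιMulti_family, pairingDual_ιMulti_ιMulti, ← det_transpose]
    congr 1
    ext i j
    simp [hf, b, Set.powersetCard.ofFinEmbEquiv_symm_apply, Pi.single_apply]
  rw [map_smul, hcoord, hpair, smul_eq_mul, mul_comm]

theorem det_one_add_X_smul_map_C_eq_sum {n : Type*} [Fintype n] [DecidableEq n]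
    (M : Matrix n n R) :
    (1 + (X : R[X]) • M.map C).det =
      ∑ s : Finset n, C (M.submatrix ((↑) : s → n) (↑)).det * X ^ s.card := by
  ext k
  simp only [coeff_det_one_add_X_smul_eq_sum_minors, finsetSum_coeff, coeff_C_mul_X_pow]
  rw [← Finset.sum_filter, Finset.powersetCard_eq_filter, Finset.powerset_univ]
  simp only [eq_comm]

theorem det_submatrix_subtype_eq_det_submatrix_orderEmbOfFin {n : Type*} [LinearOrder n]
    (M : Matrix n n R) (s : Finset n) :
    (M.submatrix ((↑) : s → n) (↑)).det =
      (M.submatrix (s.orderEmbOfFin rfl) (s.orderEmbOfFin rfl)).det := by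
  rw [← det_submatrix_equiv_self (s.orderIsoOfFin rfl).toEquiv, submatrix_submatrix]
  congr

theorem minor_eq_det_submatrix {k l p : ℕ} (x : Matrix (Fin k) (Fin l) R)
    {I : Finset (Fin k)} {S : Finset (Fin l)} (hI : I.card = p) (hS : S.card = p) :
    minor x I S = (x.submatrix (I.orderEmbOfFin hI) (S.orderEmbOfFin hS)).det := by
  subst hI
  rw [minor, dif_pos hS.symm]

theorem det_one_add_X_smul_map_C_eq_sum_minor {k : ℕ} (M : Matrix (Fin k) (Fin k) R) :
    (1 + (X : R[X]) • M.map C).det = ∑ I : Finset (Fin k), C (minor M I I) * X ^ I.card := by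
  simp only [det_one_add_X_smul_map_C_eq_sum,
    det_submatrix_subtype_eq_det_submatrix_orderEmbOfFin, minor_eq_det_submatrix M rfl rfl]

theorem minor_mul {k l m : ℕ} (x : Matrix (Fin k) (Fin l) R) (y : Matrix (Fin l) (Fin m) R)
    (I : Finset (Fin k)) (J : Finset (Fin m)) :
    minor (x * y) I J = ∑ S ∈ Finset.univ.filter (fun S : Finset (Fin l) => S.card = I.card),
      minor x I S * minor y S J := by
  by_cases hIJ : I.card = J.card
  · rw [minor_eq_det_submatrix _ rfl hIJ.symm, submatrix_mul _ _ _ id _ Function.bijective_id,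
      det_mul_eq_sum_det_submatrix_mul_det_submatrix,
      Finset.sum_subtype _ (p := (· ∈ Set.powersetCard (Fin l) I.card))
        fun S => by simp [Set.powersetCard.mem_iff]]
    refine Finset.sum_congr rfl fun S _ => ?_
    rw [minor_eq_det_submatrix x rfl S.2, minor_eq_det_submatrix y S.2 hIJ.symm,
      submatrix_submatrix, submatrix_submatrix]
    rfl
  · rw [minor, dif_neg hIJ]
    refine (Finset.sum_eq_zero fun S hS => ?_).symm
    rw [← (Finset.mem_filter.mp hS).2] at hIJ
    rw [show minor y S J = 0 from dif_neg hIJ, mul_zero]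

end

/-- The paper's `xᵀy` is the `k × k` product `x * y` here. -/
theorem det_one_add_X_smul_transpose_mul {R : Type*} [CommRing R] {k l : ℕ}
    (x : Matrix (Fin k) (Fin l) R) (y : Matrix (Fin l) (Fin k) R) :
    ((1 : Matrix (Fin k) (Fin k) R[X]) + (X : R[X]) • ((x.map C) * (y.map C))).det
      = ∑ I : Finset (Fin k),
          ∑ S ∈ Finset.univ.filter (fun S : Finset (Fin l) => S.card = I.card),
            C (minor x I S * minor y S I) * X ^ I.card := by
  rw [← Matrix.map_mul, det_one_add_X_smul_map_C_eq_sum_minor]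
  refine Finset.sum_congr rfl fun I _ => ?_
  rw [minor_mul, map_sum, Finset.sum_mul]
end

section
/- Special case of Cauchy–Binet/charpoly identity: det(I_k + xᵀy) = ∑_{I,S} Δ_{I,S}(x) Δ_{S,I}(y), summing over all pairs of subsets I ⊆ {1,…,k}, S ⊆ {1,…,ℓ} with |I| = |S| (including the empty pair contributing 1). -/
/-!
Expanding `det (1 + M)` multilinearly in the rows gives the sum of all principal minors of `M`.
For `M = x * y` the principal minor on `I` is `det (x_{I,*} * y_{*,I})`, which Cauchy–Binet
expands as `∑_S det x_{I,S} * det y_{S,I}`. Cauchy–Binet in turn comes from expanding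
`det (A * B)` multilinearly in the rows of `B`: only injective row selections `p` survive, and
writing each as the increasing enumeration of its image `S` composed with a permutation collects
the terms into `det A_{*,S} * det B_{S,*}`.
-/

open Matrix

open Finset Equiv Function

theorem Fintype.sum_fun_eq_sum_orderEmbOfFin_comp_perm {n M : Type*} [Fintype n] [LinearOrder n]
    [AddCommMonoid M] {r : ℕ} (g : (Fin r → n) → M) (hg : ∀ p, ¬Injective p → g p = 0) :
    ∑ p, g p = ∑ S : {S : Finset n // S.card = r}, ∑ σ : Perm (Fin r),
      g (S.1.orderEmbOfFin S.2 ∘ σ) := by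
  rw [← Fintype.sum_prod_type']
  symm
  refine sum_of_injOn (fun Sσ => Sσ.1.1.orderEmbOfFin Sσ.1.2 ∘ Sσ.2) ?_
    (fun _ _ => mem_coe.2 (mem_univ _)) ?_ (fun _ _ => rfl)
  · rintro ⟨⟨S, hS⟩, σ⟩ - ⟨⟨T, hT⟩, τ⟩ - h
    obtain rfl : S = T := by
      have hrange := congrArg Set.range h
      simp only [EquivLike.range_comp, range_orderEmbOfFin] at hrange
      exact_mod_cast hrange
    obtain rfl : σ = τ := Equiv.ext fun i => (S.orderEmbOfFin hS).injective (congrFun h i)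
    rfl
  · intro p _ hp
    by_contra hgp
    have hinj : Injective p := by_contra fun h => hgp (hg p h)
    set S := univ.image p
    have hS : S.card = r := by rw [card_image_of_injective _ hinj, card_univ, Fintype.card_fin]
    have hmem : ∀ i, p i ∈ S := fun i => mem_image_of_mem p (mem_univ i)
    let σ : Perm (Fin r) :=
      Equiv.ofBijective (fun i => (S.orderIsoOfFin hS).symm ⟨p i, hmem i⟩)
      (Finite.injective_iff_bijective.mp fun i j hij => hinj (by simpa using hij))
    refine hp ⟨(⟨S, hS⟩, σ), mem_coe.2 (mem_univ _), funext fun i => ?_⟩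
    simp [σ, ← coe_orderIsoOfFin_apply]

namespace Matrix

variable {R : Type*} [CommRing R]

theorem det_mul_eq_sum_prod_mul_det_submatrix {m n : Type*} [Fintype m] [DecidableEq m]
    [Fintype n] (A : Matrix m n R) (B : Matrix n m R) :
    det (A * B) = ∑ p : m → n, (∏ i, A i (p i)) * det (B.submatrix p id) := by
  have hrows : A * B = of fun i => ∑ j, A i j • B j := by
    ext i k; simp [mul_apply]
  have hexpand := (detRowAlternating : (m → R) [⋀^m]→ₗ[R] R).toMultilinearMap.map_sum
    fun i j => A i j • B j
  simp only [MultilinearMap.map_smul_univ] at hexpand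
  rw [hrows]
  exact hexpand

theorem sum_perm_prod_mul_det_submatrix {m n : Type*} [Fintype m] [DecidableEq m]
    (A : Matrix m n R) (B : Matrix n m R) (e : m → n) :
    ∑ σ : Perm m, (∏ i, A i (e (σ i))) * det (B.submatrix (e ∘ σ) id) =
      det (A.submatrix id e) * det (B.submatrix e id) := by
  rw [← det_transpose (A.submatrix id e), det_apply', sum_mul]
  refine sum_congr rfl fun σ _ => ?_
  rw [show B.submatrix (e ∘ σ) id = (B.submatrix e id).submatrix σ id from rfl, det_permute]
  simp only [transpose_apply, submatrix_apply, id]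
  ring

/-- **Cauchy–Binet formula**. -/
theorem det_mul_eq_sum_det_submatrix_mul {n : Type*} [Fintype n] [LinearOrder n] {r : ℕ}
    (A : Matrix (Fin r) n R) (B : Matrix n (Fin r) R) :
    det (A * B) = ∑ S : {S : Finset n // S.card = r},
      det (A.submatrix id (S.1.orderEmbOfFin S.2)) *
        det (B.submatrix (S.1.orderEmbOfFin S.2) id) := by
  rw [det_mul_eq_sum_prod_mul_det_submatrix, Fintype.sum_fun_eq_sum_orderEmbOfFin_comp_perm]
  · exact sum_congr rfl fun S _ => sum_perm_prod_mul_det_submatrix A B _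
  · intro p hp
    obtain ⟨i, j, hij, hne⟩ := not_injective_iff.mp hp
    have hrows : B.submatrix p id i = B.submatrix p id j := by
      funext c; rw [submatrix_apply, submatrix_apply, hij]
    rw [det_zero_of_row_eq hne hrows, mul_zero]

theorem det_of_piecewise_one {n : Type*} [Fintype n] [DecidableEq n] (S : Finset n)
    (M : Matrix n n R) :
    det (of (S.piecewise (fun i => M i) fun i => (1 : Matrix n n R) i)) =
      det (M.submatrix ((↑) : S → n) (↑)) := by
  set N := of (S.piecewise (fun i => M i) fun i => (1 : Matrix n n R) i)
  have hS : toSquareBlockProp N (· ∈ S) = M.submatrix ((↑) : S → n) (↑) := by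
    ext i j; simp [N, toSquareBlockProp]
  have hSc : toSquareBlockProp N (· ∉ S) = 1 := by
    ext i j
    simp [N, toSquareBlockProp, piecewise_eq_of_notMem _ _ _ i.2, one_apply, Subtype.ext_iff]
  have htri : ∀ i ∉ S, ∀ j ∈ S, N i j = 0 := fun i hi j hj => by
    simp [N, hi, one_apply_ne (ne_of_mem_of_not_mem hj hi).symm]
  rw [twoBlockTriangular_det N (· ∈ S) htri, hS, hSc, det_one, mul_one]
  -- the two sides differ only in the `Fintype` instance on `S`
  congr!

theorem det_one_add_eq_sum_det_submatrix {n : Type*} [Fintype n] [DecidableEq n]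
    (M : Matrix n n R) :
    det (1 + M) = ∑ S : Finset n, det (M.submatrix ((↑) : S → n) (↑)) := by
  have hexpand := (detRowAlternating : (n → R) [⋀^n]→ₗ[R] R).toMultilinearMap.map_add_univ
    (fun i => M i) fun i => (1 : Matrix n n R) i
  rw [add_comm]
  simp only [← det_of_piecewise_one]
  exact hexpand

theorem det_submatrix_orderEmbOfFin_self {n : Type*} [Fintype n] [LinearOrder n] {k : ℕ}
    (S : Finset n) (h : S.card = k) (M : Matrix n n R) :
    det (M.submatrix (S.orderEmbOfFin h) (S.orderEmbOfFin h)) =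
      det (M.submatrix ((↑) : S → n) (↑)) := by
  rw [← det_submatrix_equiv_self (S.orderIsoOfFin h).toEquiv]
  rfl

theorem det_submatrix_orderEmbOfFin_congr {m n : Type*} [LinearOrder m] [LinearOrder n]
    (M : Matrix m n R) (S : Finset m) (T : Finset n) {a b : ℕ} (hSa : S.card = a)
    (hTa : T.card = a) (hSb : S.card = b) (hTb : T.card = b) :
    det (M.submatrix (S.orderEmbOfFin hSa) (T.orderEmbOfFin hTa)) =
      det (M.submatrix (S.orderEmbOfFin hSb) (T.orderEmbOfFin hTb)) := by
  subst hSa hSb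
  rfl

end Matrix

/-- The product `xᵀ y` of the paper is the `k × k` product `x * y` here. -/
theorem det_one_add_eq_sum_minors {R : Type*} [CommRing R] {k l : ℕ}
    (x : Matrix (Fin k) (Fin l) R) (y : Matrix (Fin l) (Fin k) R) :
    ((1 : Matrix (Fin k) (Fin k) R) + x * y).det
      = ∑ I : Finset (Fin k),
          ∑ S ∈ Finset.univ.filter (fun S : Finset (Fin l) => S.card = I.card),
            minor x I S * minor y S I := by
  rw [det_one_add_eq_sum_det_submatrix]
  refine sum_congr rfl fun I _ => ?_
  rw [sum_subtype (p := fun S : Finset (Fin l) => S.card = I.card) _ (fun S => by simp),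
    ← det_submatrix_orderEmbOfFin_self I rfl, submatrix_mul x y _ id _ bijective_id,
    det_mul_eq_sum_det_submatrix_mul]
  refine sum_congr rfl fun ⟨S, hS⟩ _ => ?_
  rw [minor, minor, dif_pos hS.symm, dif_pos hS]
  exact congrArg _ (det_submatrix_orderEmbOfFin_congr y S I _ _ _ _)
end

section
/- The counting pairing theorem for #SAT: with G = ⊗ᵢ gᵢ where gᵢ = ⊗ₛ a_{is|0} + ⊗ₛ a_{is|1}, and R = ⊗ₛ rₛ where rₛ = ∑_{(ε) : c_s satisfied by (ε)} α_{i₁,s|ε₁}⊗⋯⊗α_{i_d,s|ε_d}, the pairing ⟨G, R⟩ equals the number of assignments x ∈ {0,1}^n (over 𝔽₂) satisfying all the equations c₁,…,c_m simultaneously. -/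
/-!
The coefficient of `G` at an edge labelling `η` counts the assignments `x` of the variables
with `η = x ∘ v`, where `v` sends an edge to its variable; hence `⟨G, R⟩ = ∑ₓ R_{x ∘ v}`.
At a labelling induced by `x`, every local assignment of `cₛ` agrees with `x` on the variables
occurring in `cₛ`, so `R_{x ∘ v}` is the indicator that `x` satisfies all the equations.
-/

open Finset

theorem prod_card_constant_on_fiber_eq_card_comp_eq {ι E α : Type*} [Fintype ι] [DecidableEq ι]
    [Fintype E] [Fintype α] [DecidableEq α] (v : E → ι) (η : E → α) :
    ∏ i, #{b | ∀ e, v e = i → η e = b} = #{x : ι → α | x ∘ v = η} := by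
  rw [← Fintype.card_piFinset]
  congr 1
  ext x
  simp only [Fintype.mem_piFinset, mem_filter, mem_univ, true_and, funext_iff, Function.comp_apply]
  exact ⟨fun h e => (h (v e) e rfl).symm, fun h i e he => he ▸ (h e).symm⟩

theorem Fintype.sum_card_fiber_mul {X Y R : Type*} [Fintype X] [Fintype Y] [DecidableEq Y]
    [NonAssocSemiring R] (g : X → Y) (f : Y → R) :
    ∑ y, (#{x | g x = y} : R) * f y = ∑ x, f (g x) := by
  simp_rw [← Finset.sum_fiberwise' univ g f, sum_const, nsmul_eq_mul]

/-- The counting pairing theorem for `#SAT`.  Variables `x₁,…,xₙ` and equations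
`c₁,…,c_m` over `𝔽₂` are encoded by the occurrence relation `occurs`; an edge of the
bipartite graph is a pair `(i,s)` with `occurs i s`.  For an assignment
`η : E → {0,1}` of the edges, the coefficient of `G = ⊗ᵢ gᵢ` at `η` is
`∏ᵢ #{b : η ≡ b on the edges at i}` (which is `1` if `η` is constant at `i`, `0` if not,
and `2` for an isolated variable, matching `gᵢ = ⊗ₛ a_{is|0} + ⊗ₛ a_{is|1}`), and the
coefficient of `R = ⊗ₛ rₛ` at `η` is `∏ₛ [cₛ is satisfied by the local assignment η]`.
The pairing `⟨G, R⟩ = ∑_η G_η R_η` equals the number of assignments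
`x ∈ {0,1}ⁿ` satisfying all the equations `c₁,…,c_m` simultaneously.  The hypothesis
`hsat` states that each `cₛ` depends only on the variables occurring in it. -/
theorem counting_pairing_sharpSAT (n m : ℕ) (occurs : Fin n → Fin m → Bool)
    (sat : Fin m → (Fin n → Fin 2) → Bool)
    (hsat : ∀ s x x', (∀ i, occurs i s = true → x i = x' i) → sat s x = sat s x') :
    (∑ η : {p : Fin n × Fin m // occurs p.1 p.2 = true} → Fin 2,
        (∏ i : Fin n,
          ((Finset.univ.filter (fun b : Fin 2 =>
              ∀ e : {p : Fin n × Fin m // occurs p.1 p.2 = true},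
                e.1.1 = i → η e = b)).card : ℂ)) *
        ∏ s : Fin m,
          (if sat s (fun i => if h : occurs i s = true then η ⟨(i, s), h⟩ else 0) = true
            then (1 : ℂ) else 0))
      = ((Finset.univ.filter
            (fun x : Fin n → Fin 2 => ∀ s, sat s x = true)).card : ℂ) := by
  classical
  have hlocal : ∀ (x : Fin n → Fin 2) s,
      sat s (fun i => if occurs i s = true then x i else 0) = sat s x :=
    fun x s => hsat _ _ _ fun i hi => by simp [hi]
  simp_rw [← Nat.cast_prod, prod_card_constant_on_fiber_eq_card_comp_eq
    (fun e : {p : Fin n × Fin m // occurs p.1 p.2 = true} => e.1.1)]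
  rw [Fintype.sum_card_fiber_mul]
  simp only [Function.comp_apply, dite_eq_ite, hlocal, prod_boole, mem_univ, forall_const,
    sum_boole]
end
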